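/- arXiv:2501.05645 — 5 statements merged into one kernel-verified Lean document; each statement's English description precedes it below -/
import Mathlib

section
/- Fix k ≥ 2. Let u = (u_1, …, u_k), with each u_i ∈ ℝ^N, be dual feasible for the MOT program and satisfy Σ_{i=1}^k u_i = 0 (as vectors in ℝ^N) and u_i(1) = 0 for every i = 1,…,k. Then for each i = 1,…,k and each j = 1,…,N, |u_i(j)| ≤ ((k−1)/k²)·‖x_1 − x_j‖². Consequently, ‖u_i‖₂ ≤ ((k−1)/k²)·C(X) for every i, where C(X) := (Σ_{j=1}^N ‖x_1 − x_j‖⁴)^{1/2} depends only on X. -/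
open scoped BigOperators

/-- The variance cost of the tuple `(x_{t 1}, …, x_{t k})`. -/
noncomputable def motCost {d k N : ℕ} (x : Fin N → EuclideanSpace ℝ (Fin d))
    (t : Fin k → Fin N) : ℝ :=
  (k : ℝ)⁻¹ * ∑ i, ‖x (t i) - (k : ℝ)⁻¹ • ∑ m, x (t m)‖ ^ 2

/-- Dual feasibility for the MOT program: for every tuple `(j_1,…,j_k)`,
`∑ i u_i(j_i) ≤ c(j_1,…,j_k)`. -/
def DualFeasible {d k N : ℕ} (x : Fin N → EuclideanSpace ℝ (Fin d))
    (u : Fin k → Fin N → ℝ) : Prop :=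
  ∀ t : Fin k → Fin N, ∑ i, u i (t i) ≤ motCost x t

/-!
Test feasibility on the tuples that are constant except in one slot. The tuple
`(x_1, …, x_1, x_j, x_1, …, x_1)` (with `x_j` in slot `i`) has variance cost
`(k-1)/k² ‖x_1 - x_j‖²`; since the other `u_m(1)` vanish, feasibility bounds `u_i(j)` from above.
Swapping the roles of `1` and `j` leaves `∑_{m ≠ i} u_m(j) = -u_i(j)` on the left, which gives the
bound from below.
-/

open Finset Function

lemma Finset.sum_apply_update_const {ι α M : Type*} [Fintype ι] [DecidableEq ι]
    [AddCommMonoid M] (g : ι → α → M) (i : ι) (a b : α) :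
    ∑ m, g m (update (fun _ => a) i b m) = g i b + ∑ m ∈ univ.erase i, g m a := by
  rw [← add_sum_erase _ _ (mem_univ i), update_self]
  congr 1
  exact sum_congr rfl fun m hm => by rw [update_of_ne (ne_of_mem_erase hm)]

lemma motCost_update_const {d k N : ℕ} (hk : 0 < k) (x : Fin N → EuclideanSpace ℝ (Fin d))
    (i : Fin k) (a b : Fin N) :
    motCost x (update (fun _ => a) i b) = ((k : ℝ) - 1) / (k : ℝ) ^ 2 * ‖x a - x b‖ ^ 2 := by
  have hk0 : (k : ℝ) ≠ 0 := Nat.cast_ne_zero.mpr hk.ne'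
  have hcard : ((univ.erase i).card : ℝ) = k - 1 := by
    rw [card_erase_of_mem (mem_univ i), card_univ, Fintype.card_fin, Nat.cast_pred hk]
  set v := x b - x a
  have hmean : (k : ℝ)⁻¹ • ∑ m, x (update (fun _ => a) i b m) = x a + (k : ℝ)⁻¹ • v := by
    rw [sum_apply_update_const (fun _ => x), sum_const, ← Nat.cast_smul_eq_nsmul ℝ, hcard]
    match_scalars
    · field_simp
    · field_simp
      ring
  have hb : x b - (x a + (k : ℝ)⁻¹ • v) = (1 - (k : ℝ)⁻¹) • v := by module
  have ha : x a - (x a + (k : ℝ)⁻¹ • v) = (-(k : ℝ)⁻¹) • v := by module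
  rw [motCost, hmean, sum_apply_update_const (fun _ y => ‖x y - (x a + (k : ℝ)⁻¹ • v)‖ ^ 2),
    hb, ha, sum_const, nsmul_eq_mul, hcard, norm_smul, norm_smul, norm_sub_rev (x a)]
  simp only [Real.norm_eq_abs, mul_pow, sq_abs]
  field_simp
  ring

section DualFeasible

variable {d k N : ℕ} {x : Fin N → EuclideanSpace ℝ (Fin d)} {u : Fin k → Fin N → ℝ}

lemma DualFeasible.le_of_eq_zero (hu : DualFeasible x u) (hk : 0 < k) {j₀ : Fin N}
    (h₀ : ∀ m, u m j₀ = 0) (i : Fin k) (j : Fin N) :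
    u i j ≤ ((k : ℝ) - 1) / (k : ℝ) ^ 2 * ‖x j₀ - x j‖ ^ 2 := by
  have h := hu (update (fun _ => j₀) i j)
  rwa [motCost_update_const hk, sum_apply_update_const, sum_eq_zero fun m _ => h₀ m,
    add_zero] at h

lemma DualFeasible.neg_le_of_sum_eq_zero (hu : DualFeasible x u) (hk : 0 < k) {j₀ : Fin N}
    (i : Fin k) (h₀ : u i j₀ = 0) {j : Fin N} (hj : ∑ m, u m j = 0) :
    -u i j ≤ ((k : ℝ) - 1) / (k : ℝ) ^ 2 * ‖x j₀ - x j‖ ^ 2 := by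
  have h := hu (update (fun _ => j) i j₀)
  rwa [motCost_update_const hk, sum_apply_update_const, h₀, zero_add,
    sum_erase_eq_sub (mem_univ i), hj, zero_sub, norm_sub_rev] at h

lemma DualFeasible.abs_le (hu : DualFeasible x u) (hk : 0 < k) {j₀ : Fin N}
    (hsum : ∀ j, ∑ m, u m j = 0) (h₀ : ∀ m, u m j₀ = 0) (i : Fin k) (j : Fin N) :
    |u i j| ≤ ((k : ℝ) - 1) / (k : ℝ) ^ 2 * ‖x j₀ - x j‖ ^ 2 :=
  abs_le'.mpr ⟨hu.le_of_eq_zero hk h₀ i j, hu.neg_le_of_sum_eq_zero hk i (h₀ i) (hsum j)⟩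

end DualFeasible

lemma Real.sqrt_sum_sq_le_mul_sqrt_sum_sq {ι : Type*} {s : Finset ι} {f g : ι → ℝ} {c : ℝ}
    (hc : 0 ≤ c) (h : ∀ j ∈ s, |f j| ≤ c * g j) :
    √(∑ j ∈ s, f j ^ 2) ≤ c * √(∑ j ∈ s, g j ^ 2) := by
  rw [← Real.sqrt_sq hc, ← Real.sqrt_mul (sq_nonneg c), mul_sum]
  refine Real.sqrt_le_sqrt (sum_le_sum fun j hj => ?_)
  rw [← mul_pow, ← sq_abs (f j)]
  exact pow_le_pow_left₀ (abs_nonneg _) (h j hj) 2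

theorem dual_variable_bounds_general {d k N : ℕ} (hk : 2 ≤ k) (hN : 0 < N)
    (x : Fin N → EuclideanSpace ℝ (Fin d))
    (u : Fin k → Fin N → ℝ) (hu : DualFeasible x u)
    (hsum : ∀ j, ∑ i, u i j = 0)
    (hfirst : ∀ i, u i ⟨0, hN⟩ = 0) :
    (∀ (i : Fin k) (j : Fin N),
        |u i j| ≤ ((k : ℝ) - 1) / (k : ℝ) ^ 2 * ‖x ⟨0, hN⟩ - x j‖ ^ 2) ∧
    (∀ i : Fin k,
        Real.sqrt (∑ j, u i j ^ 2) ≤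
          ((k : ℝ) - 1) / (k : ℝ) ^ 2 *
            Real.sqrt (∑ j, ‖x ⟨0, hN⟩ - x j‖ ^ 4)) := by
  have hbound := hu.abs_le (by omega) hsum hfirst
  have hc : 0 ≤ ((k : ℝ) - 1) / (k : ℝ) ^ 2 := by
    have : (1 : ℝ) ≤ k := by exact_mod_cast (by omega : 1 ≤ k)
    exact div_nonneg (by linarith) (sq_nonneg _)
  refine ⟨hbound, fun i => ?_⟩
  simpa only [← pow_mul] using
    Real.sqrt_sum_sq_le_mul_sqrt_sum_sq hc fun j _ => hbound i j

/-- bounds on the dual variables.  If `u = (u_1,…,u_k)` is dual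
feasible, `∑ i u_i = 0` and `u_i(1) = 0` for every `i`, then
`|u_i(j)| ≤ ((k−1)/k²)·‖x_1 − x_j‖²`, and consequently
`‖u_i‖₂ ≤ ((k−1)/k²)·C(X)` where `C(X) = (∑ j ‖x_1 − x_j‖⁴)^{1/2}`. -/
theorem dual_variable_bounds {d k N : ℕ} (hk : 2 ≤ k) (hN : 0 < N)
    (x : Fin N → EuclideanSpace ℝ (Fin d)) (hx : Function.Injective x)
    (u : Fin k → Fin N → ℝ) (hu : DualFeasible x u)
    (hsum : ∀ j, ∑ i, u i j = 0)
    (hfirst : ∀ i, u i ⟨0, hN⟩ = 0) :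
    (∀ (i : Fin k) (j : Fin N),
        |u i j| ≤ ((k : ℝ) - 1) / (k : ℝ) ^ 2 * ‖x ⟨0, hN⟩ - x j‖ ^ 2) ∧
    (∀ i : Fin k,
        Real.sqrt (∑ j, u i j ^ 2) ≤
          ((k : ℝ) - 1) / (k : ℝ) ^ 2 *
            Real.sqrt (∑ j, ‖x ⟨0, hN⟩ - x j‖ ^ 4)) :=
  dual_variable_bounds_general hk hN x u hu hsum hfirst
end

section
/- Fix k ≥ 2. Let u = (u_1, …, u_k), with each u_i ∈ ℝ^N, be dual feasible for the MOT program and satisfy Σ_{i=1}^k u_i = 0 (as vectors in ℝ^N). Then for every i = 1,…,k and every pair of indices j, l ∈ {1,…,N}, u_i(j) − u_i(l) ≤ ((k−1)/k²)·‖x_j − x_l‖². -/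
open scoped BigOperators

/-- if `u = (u_1,…,u_k)` is dual feasible for the MOT program and
`∑ i u_i = 0`, then for every `i` and every pair of indices `j, l`,
`u_i(j) − u_i(l) ≤ ((k−1)/k²)·‖x_j − x_l‖²`. -/
theorem dual_difference_bound {d k N : ℕ} (hk : 2 ≤ k)
    (x : Fin N → EuclideanSpace ℝ (Fin d)) (hx : Function.Injective x)
    (u : Fin k → Fin N → ℝ) (hu : DualFeasible x u)
    (hsum : ∀ j, ∑ i, u i j = 0) :
    ∀ (i : Fin k) (j l : Fin N),
      u i j - u i l ≤ ((k : ℝ) - 1) / (k : ℝ) ^ 2 * ‖x j - x l‖ ^ 2 := by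
  intro i j l
  have hk0 : (k:ℝ) ≠ 0 := Nat.cast_ne_zero.mpr (by omega)
  set t : Fin k → Fin N := fun m => if m = i then j else l with ht
  have hle := hu t
  -- LHS computation
  have hLHS : ∑ m, u m (t m) = u i j - u i l := by
    have h1 : ∑ m, (u m (t m) - u m l) = u i j - u i l := by
      rw [Finset.sum_eq_single i]
      · simp [ht]
      · intro m _ hm; simp [ht, hm]
      · intro h; exact absurd (Finset.mem_univ i) h
    rw [Finset.sum_sub_distrib, hsum l, sub_zero] at h1
    exact h1
  -- barycenter
  set v := x j - x l with hv
  have hμ : (k:ℝ)⁻¹ • ∑ m, x (t m) = x l + (k:ℝ)⁻¹ • v := by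
    have hS : ∑ m, x (t m) = v + (k:ℝ) • x l := by
      have hcongr : ∀ m ∈ Finset.univ, x (t m) = (if m = i then v else 0) + x l := by
        intro m _; by_cases h : m = i <;> simp [ht, h, hv]
      rw [Finset.sum_congr rfl hcongr, Finset.sum_add_distrib,
        Finset.sum_ite_eq' Finset.univ i (fun _ => v), Finset.sum_const,
        Finset.card_univ, Fintype.card_fin]
      simp [← Nat.cast_smul_eq_nsmul ℝ]
    rw [hS, smul_add, smul_smul, inv_mul_cancel₀ hk0, one_smul, add_comm]
  -- each term
  have hterm : ∀ m : Fin k, ‖x (t m) - (k:ℝ)⁻¹ • ∑ m', x (t m')‖ ^ 2 =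
      (if m = i then (1 - (k:ℝ)⁻¹)^2 else ((k:ℝ)⁻¹)^2) * ‖v‖ ^ 2 := by
    intro m
    rw [hμ]
    by_cases h : m = i
    · have : x (t m) - (x l + (k:ℝ)⁻¹ • v) = (1 - (k:ℝ)⁻¹) • v := by
        simp [ht, h, hv, sub_smul, smul_sub]
        abel
      rw [this, norm_smul]
      simp [h, mul_pow, abs_sq]
    · have : x (t m) - (x l + (k:ℝ)⁻¹ • v) = -((k:ℝ)⁻¹ • v) := by
        simp [ht, h]
      rw [this, norm_neg, norm_smul]
      simp [h, mul_pow, abs_sq]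
  -- total cost
  have hcost : motCost x t = ((k:ℝ) - 1) / (k:ℝ)^2 * ‖v‖^2 := by
    rw [motCost, Finset.sum_congr rfl (fun m _ => hterm m)]
    rw [← Finset.sum_mul]
    have hsplit : ∑ m : Fin k, (if m = i then (1 - (k:ℝ)⁻¹)^2 else ((k:ℝ)⁻¹)^2) =
        (1 - (k:ℝ)⁻¹)^2 + ((k:ℝ) - 1) * ((k:ℝ)⁻¹)^2 := by
      have hcongr : ∀ m ∈ Finset.univ,
          (if m = i then (1 - (k:ℝ)⁻¹)^2 else ((k:ℝ)⁻¹)^2) =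
          (if m = i then (1 - (k:ℝ)⁻¹)^2 - ((k:ℝ)⁻¹)^2 else 0) + ((k:ℝ)⁻¹)^2 := by
        intro m _; by_cases h : m = i <;> simp [h]
      rw [Finset.sum_congr rfl hcongr, Finset.sum_add_distrib,
        Finset.sum_ite_eq' Finset.univ i, Finset.sum_const, Finset.card_univ,
        Fintype.card_fin, nsmul_eq_mul]
      simp only [Finset.mem_univ, if_true]
      ring
    rw [hsplit]
    field_simp
    ring
  rw [hLHS, hcost] at hle
  exact hle
end

section
/- Let C ≥ 2 divide k, and suppose the collection (μ_1, …, μ_k) consists of C blocks of k/C identical measures, i.e. there are probability measures ν_1, …, ν_C on X such that μ_i = ν_c whenever i lies in the c-th block of k/C consecutive indices. Then MOT(μ_1,…,μ_k) = MOT(ν_1,…,ν_C), the multimarginal optimal transport value for the C-measure collection with the corresponding variance cost. In particular, for C = 2 (so μ_1 = ⋯ = μ_{k/2} = ν_1 and μ_{k/2+1} = ⋯ = μ_k = ν_2), MOT(μ_1,…,μ_k) = (1/4)·W₂²(ν_1, ν_2). -/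
/-!
The cost of a tuple is the variance of its points, i.e. their least mean squared distance to a
single point. Repeating every entry of a `C`-tuple `k / C` times does not increase its cost, so
pushing a multicoupling of the `ν`'s forward along this lift gives `MOT(μ) ≤ MOT(ν)`. Conversely,
if one index is chosen from each block of a `k`-tuple, the chosen `C`-tuple costs at most the mean
squared distance of its entries to the centroid of the whole `k`-tuple, and averaging this over
all choices gives back the cost of the `k`-tuple. Averaging the pushforwards of a multicoupling
of the `μ`'s along all choices therefore gives a multicoupling of the `ν`'s that costs no more.
For two points the variance is a quarter of their squared distance, which turns `MOT` of two
measures into `W₂² / 4`.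
-/

open scoped BigOperators

/-- A probability measure on a finite set with `N` points. -/
def IsProbVec {N : ℕ} (μ : Fin N → ℝ) : Prop :=
  (∀ j, 0 ≤ μ j) ∧ ∑ j, μ j = 1

/-- A multicoupling of `(μ_1,…,μ_k)`. -/
def IsMulticoupling {k N : ℕ} (μ : Fin k → Fin N → ℝ)
    (π : (Fin k → Fin N) → ℝ) : Prop :=
  (∀ t, 0 ≤ π t) ∧ (∑ t, π t = 1) ∧
    ∀ (i : Fin k) (j : Fin N),
      ∑ t ∈ Finset.univ.filter (fun t : Fin k → Fin N => t i = j), π t = μ i j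

/-- The optimal value of the multimarginal optimal transport program. -/
noncomputable def MOT {d k N : ℕ} (x : Fin N → EuclideanSpace ℝ (Fin d))
    (μ : Fin k → Fin N → ℝ) : ℝ :=
  sInf {v | ∃ π, IsMulticoupling μ π ∧ v = ∑ t, motCost x t * π t}

/-- The squared 2-Wasserstein distance between two measures on `X`. -/
noncomputable def W2sq {d N : ℕ} (x : Fin N → EuclideanSpace ℝ (Fin d))
    (α β : Fin N → ℝ) : ℝ :=
  sInf {v | ∃ γ : Fin N → Fin N → ℝ,
    (∀ j l, 0 ≤ γ j l) ∧ (∑ j, ∑ l, γ j l = 1) ∧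
    (∀ j, ∑ l, γ j l = α j) ∧ (∀ l, ∑ j, γ j l = β l) ∧
    v = ∑ j, ∑ l, ‖x j - x l‖ ^ 2 * γ j l}

open Finset
open scoped RealInnerProductSpace

def pushforward {α β : Type*} [Fintype α] [DecidableEq β] (g : α → β) (π : α → ℝ) (b : β) : ℝ :=
  ∑ a with g a = b, π a

theorem sum_pushforward {α β : Type*} [Fintype α] [DecidableEq β] (g : α → β) (π : α → ℝ)
    (s : Finset β) : ∑ b ∈ s, pushforward g π b = ∑ a with g a ∈ s, π a := by
  simp only [pushforward, sum_filter]
  rw [sum_comm]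
  simp_rw [sum_ite_eq]

theorem sum_mul_pushforward {α β : Type*} [Fintype α] [Fintype β] [DecidableEq β] (g : α → β)
    (π : α → ℝ) (F : β → ℝ) : ∑ b, F b * pushforward g π b = ∑ a, F (g a) * π a := by
  simp only [pushforward, sum_filter, mul_sum, mul_ite, mul_zero]
  rw [sum_comm]
  simp_rw [sum_ite_eq, mem_univ, if_true]

namespace IsMulticoupling

variable {k k' N : ℕ} {μ : Fin k → Fin N → ℝ} {π : (Fin k → Fin N) → ℝ}

theorem pushforward_comp (hπ : IsMulticoupling μ π) (σ : Fin k' → Fin k) :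
    IsMulticoupling (fun i => μ (σ i)) (pushforward (fun t => t ∘ σ) π) := by
  obtain ⟨hπ_nonneg, hπ_sum, hπ_marg⟩ := hπ
  refine ⟨fun s => sum_nonneg fun t _ => hπ_nonneg t, ?_, fun i j => ?_⟩
  · simpa [sum_pushforward] using hπ_sum
  · simpa [sum_pushforward] using hπ_marg (σ i) j

theorem average {ι : Type*} [Fintype ι] [Nonempty ι] {π : ι → (Fin k → Fin N) → ℝ}
    (hπ : ∀ f, IsMulticoupling μ (π f)) :
    IsMulticoupling μ (fun t => (Fintype.card ι : ℝ)⁻¹ * ∑ f, π f t) := by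
  have hcard : (Fintype.card ι : ℝ) ≠ 0 := by positivity
  refine ⟨fun t => mul_nonneg (by positivity) (sum_nonneg fun f _ => (hπ f).1 t), ?_,
    fun i j => ?_⟩
  · rw [← mul_sum, sum_comm]
    simp [(hπ _).2.1, hcard]
  · rw [← mul_sum, sum_comm]
    simp [(hπ _).2.2, hcard]

end IsMulticoupling

theorem sum_norm_sub_sq_eq_add {E ι : Type*} [NormedAddCommGroup E] [InnerProductSpace ℝ E]
    [Fintype ι] (y : ι → E) (a : E) :
    ∑ i, ‖y i - a‖ ^ 2 = ∑ i, ‖y i - (Fintype.card ι : ℝ)⁻¹ • ∑ j, y j‖ ^ 2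
      + Fintype.card ι * ‖(Fintype.card ι : ℝ)⁻¹ • ∑ j, y j - a‖ ^ 2 := by
  set n : ℝ := (Fintype.card ι : ℝ)
  set c := n⁻¹ • ∑ j, y j
  rcases isEmpty_or_nonempty ι with hι | hι
  · simp [n]
  have hdev : ∑ i, (y i - c) = 0 := by
    have hn : n ≠ 0 := by positivity
    rw [sum_sub_distrib, sum_const, card_univ, ← Nat.cast_smul_eq_nsmul ℝ, smul_smul,
      mul_inv_cancel₀ hn, one_smul, sub_self]
  calc ∑ i, ‖y i - a‖ ^ 2 = ∑ i, ‖(y i - c) + (c - a)‖ ^ 2 := by simp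
    _ = ∑ i, ‖y i - c‖ ^ 2 + 2 * ⟪∑ i, (y i - c), c - a⟫ + n * ‖c - a‖ ^ 2 := by
      simp only [norm_add_sq_real, sum_add_distrib, ← mul_sum, sum_inner, sum_const,
        card_univ, nsmul_eq_mul, n]
    _ = ∑ i, ‖y i - c‖ ^ 2 + n * ‖c - a‖ ^ 2 := by simp [hdev]

theorem motCost_le_sum_norm_sub_sq {d k N : ℕ} (x : Fin N → EuclideanSpace ℝ (Fin d))
    (t : Fin k → Fin N) (a : EuclideanSpace ℝ (Fin d)) :
    motCost x t ≤ (k : ℝ)⁻¹ * ∑ i, ‖x (t i) - a‖ ^ 2 := by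
  rw [motCost, sum_norm_sub_sq_eq_add (fun i => x (t i)) a, Fintype.card_fin]
  gcongr
  exact le_add_of_nonneg_right (by positivity)

theorem sum_apply_eval {ι κ M : Type*} [Fintype ι] [DecidableEq ι] [Fintype κ] [AddCommMonoid M]
    (i : ι) (h : κ → M) :
    ∑ f : ι → κ, h (f i) = Fintype.card κ ^ (Fintype.card ι - 1) • ∑ j, h j := by
  rw [← (Equiv.funSplitAt i κ).symm.sum_comp, Fintype.sum_prod_type]
  simp only [Equiv.funSplitAt_symm_apply, dite_true, sum_const, card_univ, Fintype.card_fun,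
    Fintype.card_subtype_compl, Fintype.card_unique, ← smul_sum]

@[simp]
theorem divNat_finProdFinEquiv {C m : ℕ} (p : Fin C × Fin m) :
    (finProdFinEquiv p).divNat = p.1 :=
  congrArg Prod.fst (finProdFinEquiv.symm_apply_apply p)

theorem sum_comp_divNat {C m : ℕ} {M : Type*} [AddCommMonoid M] (g : Fin C → M) :
    ∑ i : Fin (C * m), g i.divNat = m • ∑ c, g c := by
  rw [← finProdFinEquiv.sum_comp, Fintype.sum_prod_type]
  simp [smul_sum]

theorem sum_sum_comp_finProdFinEquiv {C m : ℕ} {M : Type*} [AddCommMonoid M]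
    (g : Fin (C * m) → M) :
    ∑ f : Fin C → Fin m, ∑ c, g (finProdFinEquiv (c, f c)) = m ^ (C - 1) • ∑ i, g i := by
  rw [sum_comm, ← finProdFinEquiv.sum_comp, Fintype.sum_prod_type, smul_sum]
  exact sum_congr rfl fun c _ => by
    simpa using sum_apply_eval c (fun j => g (finProdFinEquiv (c, j)))

section BlockCost

variable {d C m N : ℕ} (x : Fin N → EuclideanSpace ℝ (Fin d))

theorem motCost_comp_divNat_le (hm : 0 < m) (s : Fin C → Fin N) :
    motCost x (fun i : Fin (C * m) => s i.divNat) ≤ motCost x s := by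
  calc motCost x (fun i : Fin (C * m) => s i.divNat)
      ≤ ((C * m : ℕ) : ℝ)⁻¹ * ∑ i : Fin (C * m), ‖x (s i.divNat) - (C : ℝ)⁻¹ • ∑ c, x (s c)‖ ^ 2 :=
        motCost_le_sum_norm_sub_sq x _ _
    _ = motCost x s := by
      rw [sum_comp_divNat (fun c => ‖x (s c) - (C : ℝ)⁻¹ • ∑ c, x (s c)‖ ^ 2), nsmul_eq_mul,
        motCost, Nat.cast_mul, mul_inv, mul_assoc, inv_mul_cancel_left₀ (by positivity)]

theorem sum_motCost_comp_finProdFinEquiv_le (hC : 0 < C) (hm : 0 < m) (t : Fin (C * m) → Fin N) :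
    ∑ f : Fin C → Fin m, motCost x (fun c => t (finProdFinEquiv (c, f c)))
      ≤ m ^ C * motCost x t := by
  set a := ((C * m : ℕ) : ℝ)⁻¹ • ∑ i, x (t i)
  calc ∑ f : Fin C → Fin m, motCost x (fun c => t (finProdFinEquiv (c, f c)))
      ≤ ∑ f : Fin C → Fin m, (C : ℝ)⁻¹ * ∑ c, ‖x (t (finProdFinEquiv (c, f c))) - a‖ ^ 2 :=
        sum_le_sum fun f _ => motCost_le_sum_norm_sub_sq x _ a
    _ = (C : ℝ)⁻¹ * (m ^ (C - 1) • ∑ i, ‖x (t i) - a‖ ^ 2) := by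
      rw [← mul_sum, sum_sum_comp_finProdFinEquiv (fun i => ‖x (t i) - a‖ ^ 2)]
    _ = m ^ C * (((C * m : ℕ) : ℝ)⁻¹ * ∑ i, ‖x (t i) - a‖ ^ 2) := by
      obtain ⟨C, rfl⟩ := Nat.exists_eq_add_one.mpr hC
      rw [nsmul_eq_mul]
      push_cast
      field_simp
      ring

end BlockCost

theorem MOT_comp_divNat {d C m N : ℕ} (hC : 0 < C) (hm : 0 < m)
    (x : Fin N → EuclideanSpace ℝ (Fin d)) (ν : Fin C → Fin N → ℝ) :
    MOT x (fun i : Fin (C * m) => ν i.divNat) = MOT x ν := by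
  apply csInf_eq_csInf_of_forall_exists_le
  · rintro _ ⟨π, hπ, rfl⟩
    have : NeZero m := ⟨hm.ne'⟩
    let select (f : Fin C → Fin m) (c : Fin C) : Fin (C * m) := finProdFinEquiv (c, f c)
    have hselect : ∀ f, IsMulticoupling ν (pushforward (fun t => t ∘ select f) π) := fun f => by
      simpa [select] using hπ.pushforward_comp (select f)
    refine ⟨_, ⟨_, IsMulticoupling.average hselect, rfl⟩, ?_⟩
    have hcard : (Fintype.card (Fin C → Fin m) : ℝ) = m ^ C := by simp
    calc ∑ s, motCost x s * ((Fintype.card (Fin C → Fin m) : ℝ)⁻¹ *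
          ∑ f, pushforward (fun t => t ∘ select f) π s)
        = (m ^ C : ℝ)⁻¹ * ∑ f, ∑ s, motCost x s * pushforward (fun t => t ∘ select f) π s := by
          simp_rw [hcard, mul_sum]
          rw [sum_comm]
          exact sum_congr rfl fun f _ => sum_congr rfl fun s _ => by ring
      _ = (m ^ C : ℝ)⁻¹ * ∑ t, (∑ f, motCost x (t ∘ select f)) * π t := by
          simp_rw [sum_mul_pushforward, sum_mul]
          rw [sum_comm]
      _ ≤ (m ^ C : ℝ)⁻¹ * ∑ t, (m ^ C * motCost x t) * π t := by
          gcongr with t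
          · exact hπ.1 t
          · exact sum_motCost_comp_finProdFinEquiv_le x hC hm t
      _ = ∑ t, motCost x t * π t := by
          rw [mul_sum]
          refine sum_congr rfl fun t _ => ?_
          field_simp
  · rintro _ ⟨π, hπ, rfl⟩
    refine ⟨_, ⟨_, hπ.pushforward_comp Fin.divNat, rfl⟩, ?_⟩
    rw [sum_mul_pushforward]
    exact sum_le_sum fun s _ =>
      mul_le_mul_of_nonneg_right (motCost_comp_divNat_le x hm s) (hπ.1 s)

theorem sum_fin_two_fun {α M : Type*} [Fintype α] [AddCommMonoid M] (F : (Fin 2 → α) → M) :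
    ∑ t, F t = ∑ j, ∑ l, F ![j, l] := by
  rw [← (piFinTwoEquiv fun _ => α).symm.sum_comp, Fintype.sum_prod_type]
  rfl

theorem forall_fin_two_fun {α : Type*} {P : (Fin 2 → α) → Prop} :
    (∀ t, P t) ↔ ∀ j l, P ![j, l] :=
  ⟨fun h j l => h _, fun h t => by
    convert h (t 0) (t 1)
    ext i
    fin_cases i <;> rfl⟩

theorem sum_filter_eval_zero_fin_two {α M : Type*} [Fintype α] [DecidableEq α] [AddCommMonoid M]
    (F : (Fin 2 → α) → M) (j : α) : ∑ t with t 0 = j, F t = ∑ l, F ![j, l] := by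
  rw [sum_filter, sum_fin_two_fun]
  exact (Fintype.sum_eq_single j fun j' hj' => sum_eq_zero fun l _ => if_neg hj').trans
    (sum_congr rfl fun l _ => if_pos rfl)

theorem sum_filter_eval_one_fin_two {α M : Type*} [Fintype α] [DecidableEq α] [AddCommMonoid M]
    (F : (Fin 2 → α) → M) (l : α) : ∑ t with t 1 = l, F t = ∑ j, F ![j, l] := by
  rw [sum_filter, sum_fin_two_fun]
  exact sum_congr rfl fun j _ =>
    (Fintype.sum_eq_single l fun l' hl' => if_neg hl').trans (if_pos rfl)

theorem isMulticoupling_fin_two_iff {N : ℕ} (ν : Fin 2 → Fin N → ℝ) (π : (Fin 2 → Fin N) → ℝ) :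
    IsMulticoupling ν π ↔ (∀ j l, 0 ≤ π ![j, l]) ∧ (∑ j, ∑ l, π ![j, l] = 1) ∧
      (∀ j, ∑ l, π ![j, l] = ν 0 j) ∧ (∀ l, ∑ j, π ![j, l] = ν 1 l) := by
  simp only [IsMulticoupling, Fin.forall_fin_two, sum_filter_eval_zero_fin_two,
    sum_filter_eval_one_fin_two, sum_fin_two_fun, forall_fin_two_fun (P := fun t => 0 ≤ π t)]

theorem motCost_fin_two {d N : ℕ} (x : Fin N → EuclideanSpace ℝ (Fin d)) (t : Fin 2 → Fin N) :
    motCost x t = (1 / 4 : ℝ) * ‖x (t 0) - x (t 1)‖ ^ 2 := by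
  have h0 : x (t 0) - (2 : ℝ)⁻¹ • (x (t 0) + x (t 1)) = (2 : ℝ)⁻¹ • (x (t 0) - x (t 1)) := by
    module
  have h1 : x (t 1) - (2 : ℝ)⁻¹ • (x (t 0) + x (t 1)) = -((2 : ℝ)⁻¹ • (x (t 0) - x (t 1))) := by
    module
  rw [motCost, Fin.sum_univ_two, Fin.sum_univ_two, Nat.cast_ofNat, h0, h1, norm_neg, norm_smul]
  norm_num
  ring

theorem MOT_fin_two {d N : ℕ} (x : Fin N → EuclideanSpace ℝ (Fin d)) (ν : Fin 2 → Fin N → ℝ) :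
    MOT x ν = (1 / 4 : ℝ) * W2sq x (ν 0) (ν 1) := by
  have hcost : ∀ π : (Fin 2 → Fin N) → ℝ, ∑ t, motCost x t * π t
      = (1 / 4 : ℝ) * ∑ j, ∑ l, ‖x j - x l‖ ^ 2 * π ![j, l] := fun π => by
    simp [sum_fin_two_fun, motCost_fin_two, mul_sum, mul_assoc]
  rw [MOT, W2sq, ← smul_eq_mul, ← Real.sInf_smul_of_nonneg (by norm_num)]
  congr 1
  ext v
  simp only [Set.mem_ofPred_eq, Set.mem_smul_set, isMulticoupling_fin_two_iff, hcost]
  constructor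
  · rintro ⟨π, hπ, rfl⟩
    exact ⟨_, ⟨fun j l => π ![j, l], hπ.1, hπ.2.1, hπ.2.2.1, hπ.2.2.2, rfl⟩, rfl⟩
  · rintro ⟨_, ⟨γ, hγ_nonneg, hγ_sum, hγ_left, hγ_right, rfl⟩, rfl⟩
    exact ⟨fun t => γ (t 0) (t 1), by simpa using ⟨hγ_nonneg, hγ_sum, hγ_left, hγ_right⟩, by simp⟩

/-- `MOT` values for "clustered" alternatives.  If the collection
`(μ_1,…,μ_k)` consists of `C` blocks of `k/C` identical measures (block `c`
equal to `ν_c`), then `MOT(μ_1,…,μ_k) = MOT(ν_1,…,ν_C)`.  In particular, for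
`C = 2`, `MOT(μ_1,…,μ_k) = (1/4)·W₂²(ν_1, ν_2)`. -/
theorem mot_clustered {d k C N : ℕ} (hC : 2 ≤ C) (hk : 0 < k) (hdvd : C ∣ k)
    (x : Fin N → EuclideanSpace ℝ (Fin d))
    (μ : Fin k → Fin N → ℝ) (ν : Fin C → Fin N → ℝ)
    (hblock : ∀ (i : Fin k) (c : Fin C), (i : ℕ) / (k / C) = (c : ℕ) → μ i = ν c) :
    MOT x μ = MOT x ν ∧
    (C = 2 → MOT x μ = (1 / 4 : ℝ) * W2sq x (ν ⟨0, by omega⟩) (ν ⟨1, by omega⟩)) := by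
  obtain ⟨m, rfl⟩ := hdvd
  have hC₀ : 0 < C := by omega
  have hm : 0 < m := Nat.pos_of_mul_pos_left hk
  obtain rfl : μ = fun i => ν i.divNat := funext fun i =>
    hblock i _ (by rw [Fin.coe_divNat, Nat.mul_div_cancel_left m hC₀])
  have hMOT : MOT x (fun i : Fin (C * m) => ν i.divNat) = MOT x ν := MOT_comp_divNat hC₀ hm x ν
  refine ⟨hMOT, fun hC₂ => ?_⟩
  subst hC₂
  exact hMOT.trans (MOT_fin_two x ν)
end

section
/- Fix k ≥ 2. The functional (μ_1,…,μ_k) ↦ MOT(μ_1,…,μ_k), defined on the product of k copies of the probability simplex over X, is Lipschitz with respect to the ℓ¹ distance: there exists a constant K > 0, depending only on X and k, such that for all tuples of probability measures (μ_1,…,μ_k) and (μ̃_1,…,μ̃_k) on X, |MOT(μ_1,…,μ_k) − MOT(μ̃_1,…,μ̃_k)| ≤ K · Σ_{i=1}^k ‖μ_i − μ̃_i‖₁. -/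
open scoped BigOperators

/-!
A multicoupling of `μ` can be turned into one of `μ'` by changing `π` by at most
`∑ i, ‖μ i - μ' i‖₁` in `ℓ¹`. Replace the marginals one at a time: resample the `i`-th coordinate
through a Markov kernel `P` with `μ i ᵥ* P = μ' i` that keeps the mass `min (μ i l) (μ' i l)` in
place, so only `‖μ i - μ' i‖₁ / 2` of mass moves and the coupling changes by twice that. As the
cost is bounded, transport costs of nearby couplings are close, and passing to infima gives the
Lipschitz bound.
-/

open Finset Function Matrix

namespace Multimarginal

section Resample

variable {ι α : Type*} [DecidableEq ι] [Fintype α]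

/-- The law of a random tuple after its `i`-th coordinate is resampled through the Markov
kernel `P`. -/
def resample (i : ι) (P : Matrix α α ℝ) (π : (ι → α) → ℝ) (t : ι → α) : ℝ :=
  ∑ l, π (update t i l) * P l (t i)

lemma resample_nonneg {P : Matrix α α ℝ} (hP : ∀ l j, 0 ≤ P l j) {π : (ι → α) → ℝ}
    (hπ : ∀ t, 0 ≤ π t) (i : ι) (t : ι → α) : 0 ≤ resample i P π t :=
  sum_nonneg fun _ _ => mul_nonneg (hπ _) (hP _ _)

variable [Fintype ι]

/-- Exchanging `(t, l)` with `(update t i l, t i)` is an involution of `(ι → α) × α`. -/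
lemma sum_sum_update (i : ι) (F : (ι → α) → α → ℝ) :
    ∑ t, ∑ l, F t l = ∑ t, ∑ l, F (update t i l) (t i) := by
  let swap : (ι → α) × α → (ι → α) × α := fun p => (update p.1 i p.2, p.1 i)
  have hswap : Involutive swap := fun p => by simp [swap]
  simp only [← Fintype.sum_prod_type']
  exact (Equiv.sum_comp hswap.toPerm _).symm

lemma sum_resample_mul (i : ι) (P : Matrix α α ℝ) (π : (ι → α) → ℝ) (g : (ι → α) → ℝ) :
    ∑ t, resample i P π t * g t = ∑ t, π t * ∑ l, P (t i) l * g (update t i l) := by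
  simp only [resample, sum_mul, mul_sum]
  rw [sum_sum_update i]
  simp only [update_self, update_idem, update_eq_self, mul_assoc]

variable [DecidableEq α]

def marginal (π : (ι → α) → ℝ) (i : ι) (j : α) : ℝ :=
  ∑ t with t i = j, π t

lemma marginal_eq_sum_mul_ite (π : (ι → α) → ℝ) (i : ι) (j : α) :
    marginal π i j = ∑ t, π t * if t i = j then 1 else 0 := by
  simp only [marginal, sum_filter, mul_ite, mul_one, mul_zero]

lemma marginal_nonneg {π : (ι → α) → ℝ} (hπ : ∀ t, 0 ≤ π t) (i : ι) (j : α) :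
    0 ≤ marginal π i j :=
  sum_nonneg fun t _ => hπ t

lemma sum_marginal (π : (ι → α) → ℝ) (i : ι) : ∑ j, marginal π i j = ∑ t, π t :=
  sum_fiberwise _ _ _

lemma sum_marginal_mul (π : (ι → α) → ℝ) (i : ι) (g : α → ℝ) :
    ∑ j, marginal π i j * g j = ∑ t, π t * g (t i) := by
  simp only [marginal, sum_mul]
  rw [← sum_fiberwise (univ : Finset (ι → α)) (fun t => t i)]
  exact sum_congr rfl fun j _ => sum_congr rfl fun t ht => by rw [(mem_filter.1 ht).2]

lemma marginal_resample_self (i : ι) (P : Matrix α α ℝ) (π : (ι → α) → ℝ) :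
    marginal (resample i P π) i = marginal π i ᵥ* P := by
  ext j
  rw [marginal_eq_sum_mul_ite, sum_resample_mul, vecMul, dotProduct, sum_marginal_mul]
  simp only [update_self, mul_ite, mul_one, mul_zero, sum_ite_eq', mem_univ, if_true]

lemma sum_resample {P : Matrix α α ℝ} (hP : P ∈ rowStochastic ℝ α) (i : ι)
    (π : (ι → α) → ℝ) : ∑ t, resample i P π t = ∑ t, π t := by
  simpa [sum_row_of_mem_rowStochastic hP] using sum_resample_mul i P π 1

lemma marginal_resample_of_ne {P : Matrix α α ℝ} (hP : P ∈ rowStochastic ℝ α) {m i : ι}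
    (hmi : m ≠ i) (π : (ι → α) → ℝ) : marginal (resample i P π) m = marginal π m := by
  ext j
  simp only [marginal_eq_sum_mul_ite, sum_resample_mul, update_of_ne hmi, ← sum_mul,
    sum_row_of_mem_rowStochastic hP, one_mul]

/-- Only the off-diagonal part `Q` of `P` moves mass, and each unit it moves is counted once
leaving and once arriving. -/
lemma sum_abs_resample_sub_le {P : Matrix α α ℝ} (hP : P ∈ rowStochastic ℝ α)
    {π : (ι → α) → ℝ} (hπ : ∀ t, 0 ≤ π t) (i : ι) :
    ∑ t, |resample i P π t - π t| ≤ 2 * ∑ t, π t * (1 - P (t i) (t i)) := by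
  set Q : Matrix α α ℝ := P - diagonal (diag P)
  have hQ : ∀ l j, 0 ≤ Q l j := fun l j => by
    by_cases h : l = j
    · simp [Q, h]
    · simpa [Q, h] using nonneg_of_mem_rowStochastic hP
  have hQrow : ∀ l, ∑ j, Q l j = 1 - P l l := fun l => by
    simp [Q, Matrix.sub_apply, sum_sub_distrib, sum_row_of_mem_rowStochastic hP, diagonal_apply]
  have hresQ : ∀ t, resample i Q π t = resample i P π t - π t * P (t i) (t i) := fun t => by
    simp only [resample, Q, Matrix.sub_apply, diagonal_apply, Matrix.diag_apply, mul_sub,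
      sum_sub_distrib, mul_ite, mul_zero, sum_ite_eq', mem_univ, if_true, update_eq_self]
  have hQmass : ∑ t, resample i Q π t = ∑ t, π t * (1 - P (t i) (t i)) := by
    simpa [hQrow] using sum_resample_mul i Q π 1
  calc ∑ t, |resample i P π t - π t|
      ≤ ∑ t, (resample i Q π t + π t * (1 - P (t i) (t i))) := by
        refine sum_le_sum fun t _ => ?_
        have hmoved : 0 ≤ π t * (1 - P (t i) (t i)) :=
          mul_nonneg (hπ t) (sub_nonneg.2 (le_one_of_mem_rowStochastic hP))
        rw [show resample i P π t - π t = resample i Q π t - π t * (1 - P (t i) (t i)) by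
          rw [hresQ]; ring]
        exact (abs_sub _ _).trans_eq
          (by rw [abs_of_nonneg (resample_nonneg hQ hπ i t), abs_of_nonneg hmoved])
    _ = 2 * ∑ t, π t * (1 - P (t i) (t i)) := by rw [sum_add_distrib, hQmass]; ring

end Resample

section StochasticKernel

variable {α : Type*} [Fintype α]

lemma sum_posPart_sub_eq_sum_negPart_sub {a b : α → ℝ} (hab : ∑ l, a l = ∑ l, b l) :
    ∑ l, (a l - b l)⁺ = ∑ l, (a l - b l)⁻ := by
  rw [← sub_eq_zero, ← sum_sub_distrib]
  simp only [posPart_sub_negPart, sum_sub_distrib, hab, sub_self]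

lemma sum_abs_sub_eq_two_mul_sum_negPart_sub {a b : α → ℝ} (hab : ∑ l, a l = ∑ l, b l) :
    ∑ l, |a l - b l| = 2 * ∑ l, (a l - b l)⁻ := by
  simp only [← posPart_add_negPart, sum_add_distrib, sum_posPart_sub_eq_sum_negPart_sub hab]
  ring

variable [DecidableEq α]

/-- The kernel keeps `min (a l) (b l)` at every `l` and spreads the excess `(a l - b l)⁺`
over the points in proportion to their deficits `(a j - b j)⁻`. -/
lemma exists_mem_rowStochastic_vecMul_eq {a b : α → ℝ} (ha : a ∈ stdSimplex ℝ α)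
    (hb : b ∈ stdSimplex ℝ α) :
    ∃ P ∈ rowStochastic ℝ α, a ᵥ* P = b ∧ 2 * ∑ l, a l * (1 - P l l) ≤ ∑ l, |a l - b l| := by
  obtain ⟨ha0, ha1⟩ := ha
  obtain ⟨hb0, hb1⟩ := hb
  have hab : ∑ l, a l = ∑ l, b l := ha1.trans hb1.symm
  rw [sum_abs_sub_eq_two_mul_sum_negPart_sub hab]
  set ε := ∑ j, (a j - b j)⁻
  have hexcess : ∑ j, (a j - b j)⁺ = ε := sum_posPart_sub_eq_sum_negPart_sub hab
  rcases (sum_nonneg fun j _ => negPart_nonneg (a j - b j) : 0 ≤ ε).eq_or_lt with hε0 | hεpos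
  · have hpos := (sum_eq_zero_iff_of_nonneg fun j _ => posPart_nonneg (a j - b j)).1
      (hexcess.trans hε0.symm)
    have hneg := (sum_eq_zero_iff_of_nonneg fun j _ => negPart_nonneg (a j - b j)).1 hε0.symm
    obtain rfl : a = b := funext fun l => sub_eq_zero.1 <| by
      rw [← posPart_sub_negPart (a l - b l), hpos l (mem_univ l), hneg l (mem_univ l), sub_zero]
    refine ⟨1, one_mem _, vecMul_one a, ?_⟩
    simp only [one_apply_eq, sub_self, mul_zero, sum_const_zero]
    exact mul_nonneg zero_le_two hε0.le
  set q : α → ℝ := fun l => (a l - b l)⁺ / a l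
  set r : α → ℝ := fun j => (a j - b j)⁻ / ε
  have hq : ∀ l, a l * q l = (a l - b l)⁺ := fun l => by
    rcases (ha0 l).eq_or_lt with h | h
    · simp [q, ← h, posPart_eq_zero.2 (neg_nonpos.2 (hb0 l))]
    · exact mul_div_cancel₀ _ h.ne'
  have hq0 : ∀ l, 0 ≤ q l := fun l => div_nonneg (posPart_nonneg _) (ha0 l)
  have hq1 : ∀ l, q l ≤ 1 := fun l =>
    div_le_one_of_le₀ (sup_le (by linarith [hb0 l]) (ha0 l)) (ha0 l)
  have hr0 : ∀ j, 0 ≤ r j := fun j => div_nonneg (negPart_nonneg _) hεpos.le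
  have hr1 : ∑ j, r j = 1 := by rw [← sum_div, div_self hεpos.ne']
  refine ⟨diagonal (1 - q) + vecMulVec q r, ?_, ?_, ?_⟩
  · refine mem_rowStochastic_iff_sum.2 ⟨fun l j => ?_, fun l => ?_⟩
    · refine add_nonneg ?_ (mul_nonneg (hq0 l) (hr0 j))
      rw [diagonal_apply]
      split_ifs
      · exact sub_nonneg.2 (hq1 l)
      · exact le_rfl
    · simp [sum_add_distrib, diagonal_apply, vecMulVec_apply, ← mul_sum, hr1]
  · ext j
    simp only [vecMul_add, vecMul_diagonal, vecMul_vecMulVec, dotProduct, hq, hexcess,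
      Pi.add_apply, Pi.sub_apply, Pi.one_apply, Pi.smul_apply, smul_eq_mul, r]
    rw [mul_div_cancel₀ _ hεpos.ne', mul_one_sub, hq]
    linarith [posPart_sub_negPart (a j - b j)]
  · rw [← hexcess]
    refine mul_le_mul_of_nonneg_left (sum_le_sum fun l _ => ?_) zero_le_two
    have : a l * (1 - (diagonal (1 - q) + vecMulVec q r : Matrix α α ℝ) l l) =
        (a l - b l)⁺ * (1 - r l) := by
      simp only [Matrix.add_apply, diagonal_apply_eq, vecMulVec_apply, Pi.sub_apply, Pi.one_apply,
        ← hq]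
      ring
    rw [this]
    exact mul_le_of_le_one_right (posPart_nonneg _) (sub_le_self _ (hr0 l))

end StochasticKernel

end Multimarginal

open Multimarginal

section Multicoupling

variable {k N : ℕ} {μ μ' : Fin k → Fin N → ℝ} {π : (Fin k → Fin N) → ℝ}

lemma isMulticoupling_iff :
    IsMulticoupling μ π ↔ (∀ t, 0 ≤ π t) ∧ ∑ t, π t = 1 ∧ ∀ i, marginal π i = μ i := by
  simp only [IsMulticoupling, funext_iff]
  rfl

lemma IsMulticoupling.marginal_eq (h : IsMulticoupling μ π) (i : Fin k) : marginal π i = μ i :=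
  (isMulticoupling_iff.1 h).2.2 i

lemma IsMulticoupling.isProbVec (h : IsMulticoupling μ π) (i : Fin k) : IsProbVec (μ i) := by
  rw [← h.marginal_eq i]
  exact ⟨marginal_nonneg h.1 i, by rw [sum_marginal, h.2.1]⟩

lemma IsMulticoupling.exists_update_sum_abs_sub_le {ν : Fin N → ℝ} (h : IsMulticoupling μ π)
    (i : Fin k) (hν : IsProbVec ν) :
    ∃ π', IsMulticoupling (update μ i ν) π' ∧ ∑ t, |π' t - π t| ≤ ∑ j, |μ i j - ν j| := by
  obtain ⟨P, hP, hPν, hPdist⟩ := exists_mem_rowStochastic_vecMul_eq (h.isProbVec i) hν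
  refine ⟨resample i P π, isMulticoupling_iff.2 ⟨resample_nonneg (fun _ _ => hP.1 _ _) h.1 i,
    by rw [sum_resample hP, h.2.1], fun m => ?_⟩, ?_⟩
  · rcases eq_or_ne m i with rfl | hmi
    · rw [marginal_resample_self, h.marginal_eq, update_self, hPν]
    · rw [marginal_resample_of_ne hP hmi, update_of_ne hmi, h.marginal_eq]
  · calc ∑ t, |resample i P π t - π t| ≤ 2 * ∑ t, π t * (1 - P (t i) (t i)) :=
          sum_abs_resample_sub_le hP h.1 i
      _ = 2 * ∑ l, μ i l * (1 - P l l) := by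
          rw [← sum_marginal_mul π i (fun l => 1 - P l l), h.marginal_eq]
      _ ≤ ∑ j, |μ i j - ν j| := hPdist

lemma IsMulticoupling.exists_sum_abs_sub_le (h : IsMulticoupling μ π)
    (hμ' : ∀ i, IsProbVec (μ' i)) :
    ∃ π', IsMulticoupling μ' π' ∧ ∑ t, |π' t - π t| ≤ ∑ i, ∑ j, |μ i j - μ' i j| := by
  suffices ∀ s : Finset (Fin k), ∃ π', IsMulticoupling (s.piecewise μ' μ) π' ∧
      ∑ t, |π' t - π t| ≤ ∑ i ∈ s, ∑ j, |μ i j - μ' i j| by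
    simpa using this univ
  intro s
  induction s using Finset.induction_on with
  | empty => exact ⟨π, by simpa using h, by simp⟩
  | insert i s hi ih =>
    obtain ⟨σ, hσ, hσπ⟩ := ih
    obtain ⟨σ', hσ', hσ'σ⟩ := hσ.exists_update_sum_abs_sub_le i (hμ' i)
    rw [piecewise_eq_of_notMem _ _ _ hi] at hσ'σ
    refine ⟨σ', by rwa [piecewise_insert], ?_⟩
    calc ∑ t, |σ' t - π t| ≤ ∑ t, (|σ' t - σ t| + |σ t - π t|) :=
          sum_le_sum fun t _ => abs_sub_le _ _ _
      _ ≤ _ := by rw [sum_add_distrib, sum_insert hi]; linarith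

end Multicoupling

lemma sum_mul_le_sum_mul_add {ι : Type*} [Fintype ι] {c p q : ι → ℝ} {K : ℝ}
    (hc : ∀ t, |c t| ≤ K) : ∑ t, c t * p t ≤ ∑ t, c t * q t + K * ∑ t, |p t - q t| := by
  rw [mul_sum, ← sub_le_iff_le_add', ← sum_sub_distrib]
  refine sum_le_sum fun t _ => ?_
  calc c t * p t - c t * q t ≤ |c t| * |p t - q t| := by
        rw [← mul_sub, ← abs_mul]; exact le_abs_self _
    _ ≤ K * |p t - q t| := mul_le_mul_of_nonneg_right (hc t) (abs_nonneg _)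

lemma sInf_le_sInf_add {S T : Set ℝ} {δ : ℝ} (hT : BddBelow T) (hS : S.Nonempty)
    (hST : ∀ v ∈ S, ∃ w ∈ T, w ≤ v + δ) : sInf T ≤ sInf S + δ := by
  suffices sInf T - δ ≤ sInf S by linarith
  refine le_csInf hS fun v hv => ?_
  obtain ⟨w, hw, hwv⟩ := hST v hv
  linarith [csInf_le hT hw]

/-- If `S` is empty then so is `T`, and both infima are the junk value `0`. -/
lemma abs_sInf_sub_sInf_le {S T : Set ℝ} {δ : ℝ} (hδ : 0 ≤ δ) (hS : BddBelow S)
    (hT : BddBelow T) (hST : ∀ v ∈ S, ∃ w ∈ T, w ≤ v + δ) (hTS : ∀ w ∈ T, ∃ v ∈ S, v ≤ w + δ) :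
    |sInf S - sInf T| ≤ δ := by
  rcases S.eq_empty_or_nonempty with rfl | hSne
  · have hTe : T = ∅ := T.eq_empty_of_forall_notMem fun w hw => by simpa using hTS w hw
    simpa [hTe] using hδ
  obtain ⟨v, hv⟩ := hSne
  obtain ⟨w, hw, -⟩ := hST v hv
  rw [abs_sub_le_iff]
  constructor
  · linarith [sInf_le_sInf_add hS ⟨w, hw⟩ hTS]
  · linarith [sInf_le_sInf_add hT ⟨v, hv⟩ hST]

section MOT

variable {d k N : ℕ} (x : Fin N → EuclideanSpace ℝ (Fin d))

lemma motCost_nonneg (t : Fin k → Fin N) : 0 ≤ motCost x t := by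
  unfold motCost
  positivity

def motValues (μ : Fin k → Fin N → ℝ) : Set ℝ :=
  {v | ∃ π, IsMulticoupling μ π ∧ v = ∑ t, motCost x t * π t}

lemma mot_eq_sInf_motValues (μ : Fin k → Fin N → ℝ) : MOT x μ = sInf (motValues x μ) := rfl

lemma bddBelow_motValues (μ : Fin k → Fin N → ℝ) : BddBelow (motValues x μ) := by
  refine ⟨0, ?_⟩
  rintro _ ⟨π, hπ, rfl⟩
  exact sum_nonneg fun t _ => mul_nonneg (motCost_nonneg x t) (hπ.1 t)

lemma exists_mem_motValues_le_add {K : ℝ} (hK0 : 0 ≤ K)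
    (hK : ∀ t : Fin k → Fin N, |motCost x t| ≤ K)
    {μ μ' : Fin k → Fin N → ℝ} (hμ' : ∀ i, IsProbVec (μ' i)) {v : ℝ} (hv : v ∈ motValues x μ) :
    ∃ w ∈ motValues x μ', w ≤ v + K * ∑ i, ∑ j, |μ i j - μ' i j| := by
  obtain ⟨π, hπ, rfl⟩ := hv
  obtain ⟨π', hπ', hdist⟩ := hπ.exists_sum_abs_sub_le hμ'
  refine ⟨_, ⟨π', hπ', rfl⟩, (sum_mul_le_sum_mul_add (q := π) hK).trans ?_⟩
  gcongr

end MOT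

theorem mot_lipschitz_general {d k N : ℕ}
    (x : Fin N → EuclideanSpace ℝ (Fin d)) :
    ∃ K : ℝ, 0 < K ∧
      ∀ μ μ' : Fin k → Fin N → ℝ,
        (∀ i, IsProbVec (μ i)) → (∀ i, IsProbVec (μ' i)) →
        |MOT x μ - MOT x μ'| ≤ K * ∑ i, ∑ j, |μ i j - μ' i j| := by
  set K : ℝ := 1 + ∑ t : Fin k → Fin N, motCost x t
  have hKpos : 0 < K := add_pos_of_pos_of_nonneg one_pos (sum_nonneg fun t _ => motCost_nonneg x t)
  have hK : ∀ t, |motCost x t| ≤ K := fun t => by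
    rw [abs_of_nonneg (motCost_nonneg x t)]
    linarith [single_le_sum (fun t _ => motCost_nonneg x t) (mem_univ t)]
  refine ⟨K, hKpos, fun μ μ' hμ hμ' => ?_⟩
  rw [mot_eq_sInf_motValues, mot_eq_sInf_motValues]
  refine abs_sInf_sub_sInf_le (mul_nonneg hKpos.le (by positivity)) (bddBelow_motValues x μ)
    (bddBelow_motValues x μ') (fun v hv => exists_mem_motValues_le_add x hKpos.le hK hμ' hv)
    fun w hw => ?_
  simpa only [abs_sub_comm] using exists_mem_motValues_le_add x hKpos.le hK hμ hw

/-- the `MOT` functional is Lipschitz on the product of `k`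
copies of the probability simplex over `X`, with respect to the `ℓ¹` distance:
there is a constant `K > 0`, depending only on `X` and `k`, such that
`|MOT(μ) − MOT(μ̃)| ≤ K · ∑ i ‖μ_i − μ̃_i‖₁`. -/
theorem mot_lipschitz {d k N : ℕ} (hk : 2 ≤ k)
    (x : Fin N → EuclideanSpace ℝ (Fin d)) (hx : Function.Injective x) :
    ∃ K : ℝ, 0 < K ∧
      ∀ μ μ' : Fin k → Fin N → ℝ,
        (∀ i, IsProbVec (μ i)) → (∀ i, IsProbVec (μ' i)) →
        |MOT x μ - MOT x μ'| ≤ K * ∑ i, ∑ j, |μ i j - μ' i j| :=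
  mot_lipschitz_general x
end

section
/- Fix k ≥ 2, nonnegative weights w_1, …, w_k ≥ 0, and vectors g_1, …, g_k ∈ ℝ^N each of whose entries sum to zero (Σ_{j=1}^N g_i(j) = 0 for every i). Then for every u = (u_1,…,u_k) that is dual feasible for the MOT program and satisfies Σ_{i=1}^k u_i = 0, one has Σ_{i=1}^k w_i ⟨u_i, g_i⟩ ≤ ((k−1)/k²)·C(X)·Σ_{i=1}^k w_i ‖g_i‖₂, where C(X) := (Σ_{j=1}^N ‖x_1 − x_j‖⁴)^{1/2} depends only on X. (This is the deterministic bound on the null-limit objective underlying the uniform cut-off bound c_α(X).) -/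
open scoped BigOperators

lemma motCost_pair {d k N : ℕ} (hk : 2 ≤ k) (x : Fin N → EuclideanSpace ℝ (Fin d))
    (i : Fin k) (j j₀ : Fin N) :
    motCost x (fun i' => if i' = i then j else j₀) =
      ((k : ℝ) - 1) / (k : ℝ) ^ 2 * ‖x j₀ - x j‖ ^ 2 := by
  have hkpos : (0:ℝ) < k := by exact_mod_cast lt_of_lt_of_le (by norm_num) hk
  have hk0 : (k : ℝ) ≠ 0 := ne_of_gt hkpos
  set e : EuclideanSpace ℝ (Fin d) := x j - x j₀ with he
  have hsum : ∑ m : Fin k, x (if m = i then j else j₀) = (k : ℝ) • x j₀ + e := by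
    have : ∀ m : Fin k, x (if m = i then j else j₀) = x j₀ + (if m = i then e else 0) := by
      intro m; by_cases h : m = i <;> simp [h, he]
    simp only [this, Finset.sum_add_distrib, Finset.sum_const, Finset.card_univ,
      Fintype.card_fin, Finset.sum_ite_eq', Finset.mem_univ, if_true]
    rw [← Nat.cast_smul_eq_nsmul ℝ]
  have hmu : (k : ℝ)⁻¹ • ∑ m : Fin k, x (if m = i then j else j₀)
      = x j₀ + (k : ℝ)⁻¹ • e := by
    rw [hsum, smul_add, smul_smul, inv_mul_cancel₀ hk0, one_smul]
  have hterm : ∀ i' : Fin k,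
      ‖x (if i' = i then j else j₀) - (k : ℝ)⁻¹ • ∑ m : Fin k, x (if m = i then j else j₀)‖ ^ 2
      = ((k:ℝ)⁻¹)^2 * ‖e‖^2 + (if i' = i then (1 - 2*(k:ℝ)⁻¹) * ‖e‖^2 else 0) := by
    intro i'
    rw [hmu]
    by_cases h : i' = i
    · have : x j - (x j₀ + (k : ℝ)⁻¹ • e) = (1 - (k:ℝ)⁻¹) • e := by
        rw [sub_smul, one_smul, he]; abel
      simp only [h, if_true, this, norm_smul, mul_pow, Real.norm_eq_abs, sq_abs]
      ring
    · have : x j₀ - (x j₀ + (k : ℝ)⁻¹ • e) = (-(k:ℝ)⁻¹) • e := by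
        rw [neg_smul]; abel
      simp only [h, if_false, this, norm_smul, mul_pow, Real.norm_eq_abs, sq_abs, abs_neg]
      ring
  unfold motCost
  simp only [hterm, Finset.sum_add_distrib, Finset.sum_const, Finset.card_univ,
    Fintype.card_fin, Finset.sum_ite_eq', Finset.mem_univ, if_true, nsmul_eq_mul]
  have hnorm : ‖x j₀ - x j‖ = ‖e‖ := by rw [he, norm_sub_rev]
  rw [hnorm]
  field_simp
  ring

lemma key_bound {d k N : ℕ} (hk : 2 ≤ k) (x : Fin N → EuclideanSpace ℝ (Fin d))
    (u : Fin k → Fin N → ℝ) (hu : DualFeasible x u) (hz : ∀ j, ∑ i, u i j = 0)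
    (i : Fin k) (j j₀ : Fin N) :
    u i j - u i j₀ ≤ ((k : ℝ) - 1) / (k : ℝ) ^ 2 * ‖x j₀ - x j‖ ^ 2 := by
  have h := hu (fun i' => if i' = i then j else j₀)
  rw [motCost_pair hk] at h
  refine le_trans (le_of_eq ?_) h
  have : ∀ i' : Fin k, u i' (if i' = i then j else j₀)
      = u i' j₀ + (if i' = i then u i' j - u i' j₀ else 0) := by
    intro i'; by_cases h' : i' = i <;> simp [h']
  simp only [this, Finset.sum_add_distrib, hz j₀, Finset.sum_ite_eq',
    Finset.mem_univ, if_true, zero_add]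

/-- deterministic bound on the null-limit objective (underlying
the uniform cut-off bound `c_α(X)`).  For nonnegative weights `w_i` and vectors
`g_i` whose entries sum to zero, every dual feasible `u` with `∑ i u_i = 0`
satisfies `∑ i w_i⟨u_i, g_i⟩ ≤ ((k−1)/k²)·C(X)·∑ i w_i‖g_i‖₂`, where
`C(X) = (∑ j ‖x_1 − x_j‖⁴)^{1/2}`. -/
theorem null_objective_bound {d k N : ℕ} (hk : 2 ≤ k) (hN : 0 < N)
    (x : Fin N → EuclideanSpace ℝ (Fin d)) (hx : Function.Injective x)
    (w : Fin k → ℝ) (hw : ∀ i, 0 ≤ w i)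
    (g : Fin k → Fin N → ℝ) (hg : ∀ i, ∑ j, g i j = 0) :
    ∀ u : Fin k → Fin N → ℝ, DualFeasible x u → (∀ j, ∑ i, u i j = 0) →
      ∑ i, w i * ∑ j, u i j * g i j ≤
        ((k : ℝ) - 1) / (k : ℝ) ^ 2 *
          Real.sqrt (∑ j, ‖x ⟨0, hN⟩ - x j‖ ^ 4) *
          ∑ i, w i * Real.sqrt (∑ j, g i j ^ 2) := by
  intro u hu hz
  set j₀ : Fin N := ⟨0, hN⟩
  set K : ℝ := ((k : ℝ) - 1) / (k : ℝ) ^ 2 with hK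
  have hK0 : 0 ≤ K := by
    have : (1:ℝ) ≤ (k:ℝ) := by exact_mod_cast le_trans (by norm_num) hk
    rw [hK]
    apply div_nonneg (by linarith) (by positivity)
  set C : ℝ := Real.sqrt (∑ j, ‖x j₀ - x j‖ ^ 4) with hC
  have hC0 : 0 ≤ C := Real.sqrt_nonneg _
  have main : ∀ i, ∑ j, u i j * g i j ≤ K * C * Real.sqrt (∑ j, g i j ^ 2) := by
    intro i
    set a : Fin N → ℝ := fun j => u i j - u i j₀ with ha
    have habs : ∀ j, |a j| ≤ K * ‖x j₀ - x j‖ ^ 2 := by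
      intro j
      rw [abs_le]
      constructor
      · have h1 := key_bound hk x u hu hz i j₀ j
        rw [norm_sub_rev (x j)] at h1
        simp only [ha, hK]
        linarith [h1]
      · simpa only [ha, hK] using key_bound hk x u hu hz i j j₀
    have hrw : ∑ j, u i j * g i j = ∑ j, a j * g i j := by
      simp only [ha, sub_mul, Finset.sum_sub_distrib, ← Finset.mul_sum, hg i, mul_zero,
        sub_zero]
    rw [hrw]
    have cs : (∑ j, a j * g i j) ^ 2 ≤ (∑ j, a j ^ 2) * (∑ j, g i j ^ 2) :=
      Finset.sum_mul_sq_le_sq_mul_sq _ _ _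
    have hsum_a : ∑ j, a j ^ 2 ≤ K ^ 2 * ∑ j, ‖x j₀ - x j‖ ^ 4 := by
      rw [Finset.mul_sum]
      refine Finset.sum_le_sum fun j _ => ?_
      have := habs j
      calc a j ^ 2 = |a j| ^ 2 := (sq_abs _).symm
        _ ≤ (K * ‖x j₀ - x j‖ ^ 2) ^ 2 := by
            apply pow_le_pow_left₀ (abs_nonneg _) this
        _ = K ^ 2 * ‖x j₀ - x j‖ ^ 4 := by ring
    calc ∑ j, a j * g i j ≤ |∑ j, a j * g i j| := le_abs_self _
      _ = Real.sqrt ((∑ j, a j * g i j) ^ 2) := (Real.sqrt_sq_eq_abs _).symm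
      _ ≤ Real.sqrt ((K ^ 2 * ∑ j, ‖x j₀ - x j‖ ^ 4) * (∑ j, g i j ^ 2)) := by
          apply Real.sqrt_le_sqrt
          refine le_trans cs ?_
          apply mul_le_mul_of_nonneg_right hsum_a
          positivity
      _ = K * C * Real.sqrt (∑ j, g i j ^ 2) := by
          rw [Real.sqrt_mul (by positivity), Real.sqrt_mul (by positivity), hC,
            Real.sqrt_sq hK0]
  calc ∑ i, w i * ∑ j, u i j * g i j
      ≤ ∑ i, w i * (K * C * Real.sqrt (∑ j, g i j ^ 2)) := by
        refine Finset.sum_le_sum fun i _ => ?_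
        exact mul_le_mul_of_nonneg_left (main i) (hw i)
    _ = K * C * ∑ i, w i * Real.sqrt (∑ j, g i j ^ 2) := by
        rw [Finset.mul_sum]; exact Finset.sum_congr rfl fun i _ => by ring
end
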